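/- Let D be a strongly connected tournament, a a vertex, x ∈ a⁺ and y ∈ a⁻ with line(a,x) = line(y,a), and suppose line(x,y) belongs to Z = {line(a,z) : z ∈ a⁺} ∪ {line(z,a) : z ∈ a⁻}. Then a⁺ ∩ y⁻ = {x} and a⁻ ∩ x⁺ = {y}. -/

import Mathlib

open scoped Classical

/-- `stepsTo A n u v` : there is a directed walk of length `n` from `u` to `v`
in the digraph with arc relation `A`. -/
def stepsTo {V : Type*} (A : V → V → Prop) : ℕ → V → V → Prop
  | 0, u, v => u = v
  | n+1, u, v => ∃ w, A u w ∧ stepsTo A n w v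

/-- A digraph is strongly connected if every vertex is reachable from every vertex. -/
def StronglyConnected {V : Type*} (A : V → V → Prop) : Prop :=
  ∀ u v : V, ∃ n : ℕ, stepsTo A n u v

/-- The directed distance: the length of a shortest directed path from `u` to `v`. -/
noncomputable def ddist {V : Type*} (A : V → V → Prop) (u v : V) : ℕ :=
  sInf {n : ℕ | stepsTo A n u v}

/-- `btw A u v z` means `z ∈ [u,v]`, i.e. `z` lies on a shortest dipath from `u` to `v`. -/
def btw {V : Type*} (A : V → V → Prop) (u v z : V) : Prop :=
  ddist A u v = ddist A u z + ddist A z v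

/-- The line generated by the ordered pair `(u,v)`:
`{z : u ∈ [z,v] or v ∈ [u,z] or z ∈ [u,v]}`. -/
def line {V : Type*} (A : V → V → Prop) (u v : V) : Set V :=
  {z | btw A z v u ∨ btw A u z v ∨ btw A u v z}

/-- `L(D)`: the set of all lines generated by ordered pairs of distinct vertices. -/
def lineSet {V : Type*} (A : V → V → Prop) : Set (Set V) :=
  {S | ∃ u v : V, u ≠ v ∧ S = line A u v}

/-!
Reversing every arc turns `line(u,v)` into `line(v,u)`; it preserves all hypotheses while
swapping `x` and `y`, and it exchanges the two conclusions, so only the first one needs a proof.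

Since `y ∈ line(a,x)` and `x ∈ line(y,a)`, we get `d(a,y) = d(x,y) + 1 = d(x,a)`. Suppose
`w ≠ x`, `a → w` and `line(x,y) = line(a,w)`. Then `d(x,w) = d(x,a) + 1 ≥ 3`, which forces
`w → y`; hence `w ∈ line(y,a) = line(a,x)`, and so `d(w,x) = 3`. This is impossible in a
tournament. Together with its dual, this shows `line(x,y) = line(y,a)`.

If `y → x` held, then `d(a,y) ≥ 3`. Walking backwards along a shortest `x`–`y` path, every
vertex on it beats `a` and dominates the out-neighbourhood of `y`. At `x` this contradicts
`a → x`. So `x → y`, and any other `z ∈ a⁺ ∩ y⁻` lies in `line(y,a)` but not in `line(x,y)`.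
-/

structure IsTournament {V : Type*} (A : V → V → Prop) : Prop where
  anti : ∀ u v : V, ¬ (A u v ∧ A v u)
  total : ∀ u v : V, u ≠ v → A u v ∨ A v u

section Digraph

variable {V : Type*} {A : V → V → Prop} {a s u v w x y z : V} {m n : ℕ}

theorem stepsTo_one (h : A u v) : stepsTo A 1 u v := ⟨v, h, rfl⟩

theorem stepsTo_two (h₁ : A u w) (h₂ : A w v) : stepsTo A 2 u v := ⟨w, h₁, stepsTo_one h₂⟩

theorem stepsTo.trans (h₁ : stepsTo A m u v) (h₂ : stepsTo A n v w) :
    stepsTo A (m + n) u w := by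
  induction m generalizing u with
  | zero => obtain rfl : u = v := h₁; rwa [Nat.zero_add]
  | succ m ih =>
    obtain ⟨t, hut, htv⟩ := h₁
    rw [Nat.succ_add]
    exact ⟨t, hut, ih htv⟩

theorem stepsTo.flip (h : stepsTo A n u v) : stepsTo (flip A) n v u := by
  induction n generalizing u with
  | zero => exact (h : u = v).symm
  | succ n ih =>
    obtain ⟨t, hut, htv⟩ := h
    exact (ih htv).trans (stepsTo_one (A := flip A) hut)

theorem stepsTo_flip : stepsTo (flip A) n u v ↔ stepsTo A n v u :=
  ⟨stepsTo.flip, stepsTo.flip⟩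

theorem ddist_flip (u v : V) : ddist (flip A) u v = ddist A v u := by
  simp only [ddist, stepsTo_flip]

theorem btw_iff_ddist : btw A u v z ↔ ddist A u v = ddist A u z + ddist A z v := Iff.rfl

theorem line_flip (u v : V) : line (flip A) u v = line A v u := by
  ext z
  simp only [line, btw_iff_ddist, ddist_flip, Set.mem_ofPred_eq]
  constructor <;> intro h <;> omega

theorem StronglyConnected.flip (hsc : StronglyConnected A) : StronglyConnected (flip A) :=
  fun u v => (hsc v u).imp fun _ => stepsTo.flip

theorem ddist_le (h : stepsTo A n u v) : ddist A u v ≤ n := Nat.sInf_le h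

theorem ddist_le_one (h : A u v) : ddist A u v ≤ 1 := ddist_le (stepsTo_one h)

theorem ddist_le_two (h₁ : A u w) (h₂ : A w v) : ddist A u v ≤ 2 :=
  ddist_le (stepsTo_two h₁ h₂)

theorem ddist_self (u : V) : ddist A u u = 0 := Nat.eq_zero_of_le_zero (ddist_le rfl)

theorem mem_line_of_btw (h : btw A u v z) : z ∈ line A u v := Or.inr (Or.inr h)

theorem mem_line_left (u v : V) : u ∈ line A u v :=
  mem_line_of_btw (by simp [btw_iff_ddist, ddist_self])

theorem mem_line_right (u v : V) : v ∈ line A u v :=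
  mem_line_of_btw (by simp [btw_iff_ddist, ddist_self])

namespace StronglyConnected

theorem stepsTo_ddist (hsc : StronglyConnected A) (u v : V) : stepsTo A (ddist A u v) u v :=
  Nat.sInf_mem (hsc u v)

theorem ddist_eq_zero_iff (hsc : StronglyConnected A) : ddist A u v = 0 ↔ u = v := by
  refine ⟨fun h => ?_, fun h => h ▸ ddist_self u⟩
  have hs := hsc.stepsTo_ddist u v
  rw [h] at hs
  exact hs

theorem ddist_triangle (hsc : StronglyConnected A) (u v w : V) :
    ddist A u w ≤ ddist A u v + ddist A v w :=
  ddist_le ((hsc.stepsTo_ddist u v).trans (hsc.stepsTo_ddist v w))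

theorem arc_of_ddist_eq_one (hsc : StronglyConnected A) (h : ddist A u v = 1) : A u v := by
  have hs := hsc.stepsTo_ddist u v
  rw [h] at hs
  obtain ⟨w, huw, rfl : w = v⟩ := hs
  exact huw

theorem exists_arc_ddist_eq (hsc : StronglyConnected A) (h : ddist A u v = n + 1) :
    ∃ w, A u w ∧ ddist A w v = n := by
  have hs := hsc.stepsTo_ddist u v
  rw [h] at hs
  obtain ⟨w, huw, hwv⟩ := hs
  have := ddist_le hwv
  have := ddist_le ((stepsTo_one huw).trans (hsc.stepsTo_ddist w v))
  exact ⟨w, huw, by omega⟩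

theorem backward_induction (hsc : StronglyConnected A) {P : V → Prop} (hy : P y)
    (hstep : ∀ v t, btw A x y v → A v t → P t → P v) : P x := by
  suffices ∀ n v, ddist A v y = n → btw A x y v → P v from
    this _ x rfl (by simp [btw_iff_ddist, ddist_self])
  intro n
  induction n with
  | zero =>
    intro v hv _
    rwa [hsc.ddist_eq_zero_iff.1 hv]
  | succ n ih =>
    intro v hv hxv
    obtain ⟨t, hvt, hty⟩ := hsc.exists_arc_ddist_eq hv
    refine hstep v t hxv hvt (ih t hty ?_)
    have := hsc.ddist_triangle x v t
    have := hsc.ddist_triangle x t y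
    have := ddist_le_one hvt
    rw [btw_iff_ddist] at hxv ⊢
    omega

theorem ddist_eq_add_one_of_mem_line (hsc : StronglyConnected A) (hx : ddist A a x = 1)
    (hw : ddist A a w = 1) (hmem : w ∈ line A a x) (hne : w ≠ x) :
    ddist A w x = ddist A w a + 1 := by
  rcases hmem with h | h | h <;> rw [btw_iff_ddist] at h
  · omega
  · exact absurd (hsc.ddist_eq_zero_iff.1 (by omega)).symm hne
  · exact absurd (hsc.ddist_eq_zero_iff.1 (by omega)) hne

end StronglyConnected

namespace IsTournament

theorem flip (hT : IsTournament A) : IsTournament (flip A) :=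
  ⟨fun u v h => hT.anti v u h, fun u v h => hT.total v u h.symm⟩

theorem ne_of_arc (hT : IsTournament A) (h : A u v) : u ≠ v := by
  rintro rfl
  exact hT.anti u u ⟨h, h⟩

theorem not_arc (hT : IsTournament A) (h : A u v) : ¬ A v u := fun h' => hT.anti u v ⟨h, h'⟩

theorem arc_of_not_arc (hT : IsTournament A) (hne : u ≠ v) (h : ¬ A v u) : A u v :=
  (hT.total u v hne).resolve_right h

theorem ddist_eq_one (hT : IsTournament A) (hsc : StronglyConnected A) (h : A u v) :
    ddist A u v = 1 := by
  have := ddist_le_one h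
  have := mt hsc.ddist_eq_zero_iff.1 (hT.ne_of_arc h)
  omega

theorem two_le_ddist (hT : IsTournament A) (hsc : StronglyConnected A) (h : A v u) :
    2 ≤ ddist A u v := by
  have := mt hsc.ddist_eq_zero_iff.1 (hT.ne_of_arc h).symm
  have := mt hsc.arc_of_ddist_eq_one (hT.not_arc h)
  omega

theorem ddist_eq_two (hT : IsTournament A) (hsc : StronglyConnected A) (h₁ : A u w)
    (h₂ : A w v) (h : A v u) : ddist A u v = 2 :=
  le_antisymm (ddist_le_two h₁ h₂) (hT.two_le_ddist hsc h)

theorem ddist_eq_one_or (hT : IsTournament A) (hsc : StronglyConnected A) (hne : u ≠ v) :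
    ddist A u v = 1 ∨ ddist A v u = 1 :=
  (hT.total u v hne).imp (hT.ddist_eq_one hsc) (hT.ddist_eq_one hsc)

theorem arc_of_two_le_ddist (hT : IsTournament A) (h : 2 ≤ ddist A u v) : A v u := by
  refine hT.arc_of_not_arc ?_ fun huv => ?_
  · rintro rfl
    rw [ddist_self] at h
    omega
  · have := ddist_le_one huv
    omega

theorem arc_of_two_lt_ddist (hT : IsTournament A) (h : 2 < ddist A u v) (hus : A u s) :
    A v s := by
  refine hT.arc_of_not_arc ?_ fun hsv => ?_
  · rintro rfl
    have := ddist_le_one hus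
    omega
  · have := ddist_le_two hus hsv
    omega

end IsTournament

end Digraph

section LineConfiguration

variable {V : Type*} {A : V → V → Prop} {a v w x y : V}

theorem ddist_eq_ddist_add_one_left (hT : IsTournament A) (hsc : StronglyConnected A)
    (hx : A a x) (hy : A y a) (hrep : line A a x = line A y a) :
    ddist A a y = ddist A x y + 1 := by
  have hya := hT.two_le_ddist hsc hy
  rcases (hrep ▸ mem_line_left y a : y ∈ line A a x) with h | h | h <;>
    rw [btw_iff_ddist] at h
  · have hxy : A x y := hT.arc_of_two_le_ddist (by
      rw [h, hT.ddist_eq_one hsc hx, hT.ddist_eq_one hsc hy])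
    have := hT.ddist_eq_one hsc hxy
    have := ddist_le_two hx hxy
    omega
  · rwa [hT.ddist_eq_one hsc hx, Nat.add_comm] at h
  · have := hT.ddist_eq_one hsc hx
    omega

theorem ddist_eq_ddist_add_one_right (hT : IsTournament A) (hsc : StronglyConnected A)
    (hx : A a x) (hy : A y a) (hrep : line A a x = line A y a) :
    ddist A x a = ddist A x y + 1 := by
  simpa only [ddist_flip] using ddist_eq_ddist_add_one_left hT.flip hsc.flip hy hx
    (by simpa only [line_flip] using hrep.symm)

theorem mem_line_of_arc_of_arc (hT : IsTournament A) (hsc : StronglyConnected A)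
    (hy : A y a) (haw : A a w) (hwy : A w y) : w ∈ line A y a := by
  refine Or.inl ?_
  rw [btw_iff_ddist, hT.ddist_eq_two hsc hwy hy haw, hT.ddist_eq_one hsc hwy,
    hT.ddist_eq_one hsc hy]

theorem ddist_eq_three (hT : IsTournament A) (hsc : StronglyConnected A)
    (hx : A a x) (hy : A y a) (hrep : line A a x = line A y a)
    (haw : A a w) (hwy : A w y) (hwx : w ≠ x) : ddist A w x = 3 := by
  rw [hsc.ddist_eq_add_one_of_mem_line (hT.ddist_eq_one hsc hx) (hT.ddist_eq_one hsc haw)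
    (hrep ▸ mem_line_of_arc_of_arc hT hsc hy haw hwy) hwx, hT.ddist_eq_two hsc hwy hy haw]

theorem line_ne_line_of_arc_left (hT : IsTournament A) (hsc : StronglyConnected A)
    (hx : A a x) (hy : A y a) (hrep : line A a x = line A y a)
    (haw : A a w) (hwx : w ≠ x) : line A x y ≠ line A a w := by
  intro heq
  have hxw := hsc.ddist_eq_add_one_of_mem_line (hT.ddist_eq_one hsc haw)
    (hT.ddist_eq_one hsc hx) (heq ▸ mem_line_left x y) hwx.symm
  have hxa := ddist_eq_ddist_add_one_right hT hsc hx hy hrep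
  have hwy : A w y := hT.arc_of_two_le_ddist (by
    have := hsc.ddist_triangle x y w
    omega)
  have hwx3 := ddist_eq_three hT hsc hx hy hrep haw hwy hwx
  rcases hT.ddist_eq_one_or hsc hwx with h | h <;> omega

theorem line_ne_line_of_arc_right (hT : IsTournament A) (hsc : StronglyConnected A)
    (hx : A a x) (hy : A y a) (hrep : line A a x = line A y a)
    (hwa : A w a) (hwy : w ≠ y) : line A x y ≠ line A w a := by
  simpa only [line_flip] using line_ne_line_of_arc_left hT.flip hsc.flip hy hx
    (by simpa only [line_flip] using hrep.symm) hwa hwy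

theorem line_eq_line_of_mem (hT : IsTournament A) (hsc : StronglyConnected A)
    (hx : A a x) (hy : A y a) (hrep : line A a x = line A y a)
    (hZ : (∃ z, A a z ∧ line A x y = line A a z) ∨ (∃ z, A z a ∧ line A x y = line A z a)) :
    line A x y = line A y a := by
  rcases hZ with ⟨w, haw, h⟩ | ⟨w, hwa, h⟩
  · obtain rfl : w = x := by_contra fun hwx =>
      line_ne_line_of_arc_left hT hsc hx hy hrep haw hwx h
    rw [h, hrep]
  · obtain rfl : w = y := by_contra fun hwy =>
      line_ne_line_of_arc_right hT hsc hx hy hrep hwa hwy h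
    exact h

theorem two_lt_ddist_of_mem_line (hT : IsTournament A) (hsc : StronglyConnected A)
    (hy : A y a) (hva : A v a) (hv : v ∈ line A y a) (hvy : v ≠ y) : 2 < ddist A y v := by
  have := hT.ddist_eq_one hsc hy
  have := hT.ddist_eq_one hsc hva
  have := hT.two_le_ddist hsc hva
  rcases hv with h | h | h <;> rw [btw_iff_ddist] at h
  · exact absurd (hsc.ddist_eq_zero_iff.1 (by omega)) hvy
  · omega
  · exact absurd (hsc.ddist_eq_zero_iff.1 (by omega)).symm hvy

theorem arc_of_line_eq_line (hT : IsTournament A) (hsc : StronglyConnected A)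
    (hx : A a x) (hy : A y a) (hrep : line A a x = line A y a)
    (hline : line A x y = line A y a) : A x y := by
  by_contra hxy
  have hyx : A y x := hT.arc_of_not_arc (fun h => hT.not_arc hy (h ▸ hx)) hxy
  have hay : 2 < ddist A a y := by
    have := ddist_eq_ddist_add_one_left hT hsc hx hy hrep
    have := hT.two_le_ddist hsc hyx
    omega
  have key : A x a ∧ ∀ s, A y s → A x s := by
    refine hsc.backward_induction (P := fun v => A v a ∧ ∀ s, A y s → A v s)
      ⟨hy, fun _ => id⟩ ?_
    rintro v t hv hvt ⟨-, hyt⟩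
    have hva : A v a := by
      refine hT.arc_of_not_arc ?_ fun hav => hT.not_arc hvt (hyt v (hT.arc_of_two_lt_ddist hay hav))
      rintro rfl
      exact hT.ne_of_arc (hyt t (hT.arc_of_two_lt_ddist hay hvt)) rfl
    refine ⟨hva, ?_⟩
    rcases eq_or_ne v y with rfl | hvy
    · exact fun _ => id
    · exact fun s => hT.arc_of_two_lt_ddist
        (two_lt_ddist_of_mem_line hT hsc hy hva (hline ▸ mem_line_of_btw hv) hvy)
  exact hT.not_arc hx key.1

theorem setOf_arc_arc_eq_singleton (hT : IsTournament A) (hsc : StronglyConnected A)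
    (hx : A a x) (hy : A y a) (hrep : line A a x = line A y a)
    (hline : line A x y = line A y a) : {z | A a z ∧ A z y} = {x} := by
  have hxy := arc_of_line_eq_line hT hsc hx hy hrep hline
  refine Set.eq_singleton_iff_unique_mem.2 ⟨⟨hx, hxy⟩, ?_⟩
  rintro z ⟨haz, hzy⟩
  by_contra hzx
  have hzx3 := ddist_eq_three hT hsc hx hy hrep haz hzy hzx
  have := hT.ddist_eq_one hsc hxy
  have := hT.ddist_eq_one hsc hzy
  have := hT.two_le_ddist hsc hzy
  have hxz : 3 ≤ ddist A x z := by
    rcases (hline ▸ mem_line_of_arc_of_arc hT hsc hy haz hzy : z ∈ line A x y) with h | h | h <;>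
      rw [btw_iff_ddist] at h
    · omega
    · omega
    · exact absurd (hsc.ddist_eq_zero_iff.1 (by omega)).symm hzx
  rcases hT.ddist_eq_one_or hsc hzx with h | h <;> omega

end LineConfiguration

theorem stmt12_general {V : Type*} (A : V → V → Prop)
    (hanti : ∀ u v : V, ¬ (A u v ∧ A v u))
    (hcomp : ∀ u v : V, u ≠ v → A u v ∨ A v u)
    (hsc : StronglyConnected A)
    (a x y : V) (hx : A a x) (hy : A y a) (hrep : line A a x = line A y a)
    (hZ : line A x y ∈ ({S | (∃ z : V, A a z ∧ S = line A a z) ∨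
               (∃ z : V, A z a ∧ S = line A z a)} : Set (Set V))) :
    {z : V | A a z ∧ A z y} = {x} ∧ {z : V | A z a ∧ A x z} = {y} := by
  have hT : IsTournament A := ⟨hanti, hcomp⟩
  have hline := line_eq_line_of_mem hT hsc hx hy hrep hZ
  exact ⟨setOf_arc_arc_eq_singleton hT hsc hx hy hrep hline,
    setOf_arc_arc_eq_singleton hT.flip hsc.flip hy hx
      (by simpa only [line_flip] using hrep.symm)
      (by simpa only [line_flip] using hline.trans hrep.symm)⟩

theorem stmt12 {V : Type*} [Fintype V] (A : V → V → Prop)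
    (hanti : ∀ u v : V, ¬ (A u v ∧ A v u))
    (hcomp : ∀ u v : V, u ≠ v → A u v ∨ A v u)
    (hsc : StronglyConnected A)
    (a x y : V) (hx : A a x) (hy : A y a) (hrep : line A a x = line A y a)
    (hZ : line A x y ∈ ({S | (∃ z : V, A a z ∧ S = line A a z) ∨
               (∃ z : V, A z a ∧ S = line A z a)} : Set (Set V))) :
    {z : V | A a z ∧ A z y} = {x} ∧ {z : V | A z a ∧ A x z} = {y} :=
  stmt12_general A hanti hcomp hsc a x y hx hy hrep hZ
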